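/- The set n1 of nilpotent matrices belonging to m is a linear subspace of dimension 3, namely n1 = span_ℂ{X1 − X2, X3, X1 + X2 − 2·X4}, it is an ideal of the Lie algebra m, and m decomposes as a direct sum of vector spaces m = n1 ⊕ ℂ·X4. -/

import Mathlib

open Matrix

noncomputable section

def X1 (α β : ℂ) : Matrix (Fin 4) (Fin 4) ℂ :=
  !![1,1,0,1; 1,1,0,0; α,β,0,0; 0,0,0,0]

def X2 (α β : ℂ) : Matrix (Fin 4) (Fin 4) ℂ :=
  !![1,1,0,0; 1,1,0,1; β-1,α+1,0,0; 0,0,0,0]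

def X3 : Matrix (Fin 4) (Fin 4) ℂ :=
  !![0,0,0,0; 0,0,0,0; 0,0,0,1; 0,0,0,0]

/-- The ℂ-linear span of {X1, X2, X3}. -/
def h (α β : ℂ) : Submodule ℂ (Matrix (Fin 4) (Fin 4) ℂ) :=
  Submodule.span ℂ {X1 α β, X2 α β, X3}
def X4 (α β : ℂ) : Matrix (Fin 4) (Fin 4) ℂ :=
  !![1,1,0,1/2; 1,1,0,1/2; (α+β)/2,(α+β)/2,0,(α+β)/4; 0,0,0,0]

/-- The ℂ-linear span of {X1, X2, X3, X4}. -/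
def m (α β : ℂ) : Submodule ℂ (Matrix (Fin 4) (Fin 4) ℂ) :=
  Submodule.span ℂ {X1 α β, X2 α β, X3, X4 α β}

/-! Every element of `n1` has the shape `n1Mat p q r`, and a product of two such matrices is a
multiple of the (2,3) matrix unit, so they are nilpotent and `n1` is closed under brackets;
moreover `X4` commutes with all of them. Since `m = n1 ⊕ ℂ ∙ X4` and every `n1Mat` is traceless
while `tr X4 = 2`, a nilpotent, hence traceless, element of `m` has no `X4`-component. -/

theorem Submodule.span_sub_add_sub_two_smul_sup_span_singleton {K V : Type*} [Field K]
    [CharZero K] [AddCommGroup V] [Module K V] (a b c d : V) :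
    span K {a - b, c, a + b - (2 : K) • d} ⊔ span K {d} = span K {a, b, c, d} := by
  apply le_antisymm
  · refine sup_le (span_le.mpr ?_) (span_le.mpr ?_)
    · rintro x (rfl | rfl | rfl)
      · exact sub_mem (subset_span (by simp)) (subset_span (by simp))
      · exact subset_span (by simp)
      · exact sub_mem (add_mem (subset_span (by simp)) (subset_span (by simp)))
          (smul_mem _ _ (subset_span (by simp)))
    · simpa using subset_span (by simp)
  · have hu : a - b ∈ span K {a - b, c, a + b - (2 : K) • d} ⊔ span K {d} :=
      mem_sup_left (subset_span (by simp))
    have hv : a + b - (2 : K) • d ∈ span K {a - b, c, a + b - (2 : K) • d} ⊔ span K {d} :=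
      mem_sup_left (subset_span (by simp))
    have hd : d ∈ span K {a - b, c, a + b - (2 : K) • d} ⊔ span K {d} :=
      mem_sup_right (mem_span_singleton_self d)
    simp only [span_le, Set.insert_subset_iff, Set.singleton_subset_iff, SetLike.mem_coe]
    refine ⟨?_, ?_, mem_sup_left (subset_span (by simp)), hd⟩
    · convert add_mem (add_mem (smul_mem _ (2⁻¹ : K) hu) (smul_mem _ (2⁻¹ : K) hv)) hd using 1
      module
    · convert add_mem (add_mem (smul_mem _ (-2⁻¹ : K) hu) (smul_mem _ (2⁻¹ : K) hv)) hd using 1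
      module

def n1 (α β : ℂ) : Submodule ℂ (Matrix (Fin 4) (Fin 4) ℂ) :=
  Submodule.span ℂ {X1 α β - X2 α β, X3, X1 α β + X2 α β - (2 : ℂ) • X4 α β}

def n1Mat (p q r : ℂ) : Matrix (Fin 4) (Fin 4) ℂ :=
  !![0,0,0,p; 0,0,0,-p; q,-q,0,r; 0,0,0,0]

section n1Mat

variable (p q r p' q' r' : ℂ)

theorem n1Mat_add : n1Mat p q r + n1Mat p' q' r' = n1Mat (p + p') (q + q') (r + r') := by
  ext i j
  fin_cases i <;> fin_cases j <;> simp [n1Mat] <;> ring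

theorem smul_n1Mat (c : ℂ) : c • n1Mat p q r = n1Mat (c * p) (c * q) (c * r) := by
  ext i j
  fin_cases i <;> fin_cases j <;> simp [n1Mat]

theorem n1Mat_eq_zero_iff : n1Mat p q r = 0 ↔ p = 0 ∧ q = 0 ∧ r = 0 := by
  refine ⟨fun h ↦ ⟨?_, ?_, ?_⟩, fun ⟨hp, hq, hr⟩ ↦ ?_⟩
  · simpa [n1Mat] using congrFun (congrFun h 0) 3
  · simpa [n1Mat] using congrFun (congrFun h 2) 0
  · simpa [n1Mat] using congrFun (congrFun h 2) 3
  · ext i j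
    fin_cases i <;> fin_cases j <;> simp [n1Mat, hp, hq, hr]

theorem n1Mat_mul : n1Mat p q r * n1Mat p' q' r' = n1Mat 0 0 (2 * q * p') := by
  ext i j
  fin_cases i <;> fin_cases j <;>
    simp [n1Mat, mul_apply, Fin.sum_univ_four, ← two_mul, mul_assoc]

theorem n1Mat_pow_three : n1Mat p q r ^ 3 = 0 := by
  rw [pow_succ, pow_two, n1Mat_mul, n1Mat_mul, n1Mat_eq_zero_iff]
  simp

theorem lie_n1Mat : ⁅n1Mat p q r, n1Mat p' q' r'⁆ = n1Mat 0 0 (2 * (q * p' - q' * p)) := by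
  rw [Ring.lie_def, n1Mat_mul, n1Mat_mul]
  ext i j
  fin_cases i <;> fin_cases j <;> simp [n1Mat, mul_sub, mul_assoc]

theorem lie_X4_n1Mat (α β : ℂ) : ⁅X4 α β, n1Mat p q r⁆ = 0 := by
  ext i j
  fin_cases i <;> fin_cases j <;> simp [Ring.lie_def, X4, n1Mat]

theorem trace_n1Mat : (n1Mat p q r).trace = 0 := by
  simp [trace, Fin.sum_univ_four, n1Mat]

end n1Mat

theorem trace_X4 (α β : ℂ) : (X4 α β).trace = 2 := by
  simp [trace, Fin.sum_univ_four, X4, one_add_one_eq_two]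

section
variable (α β : ℂ)

theorem X1_sub_X2 : X1 α β - X2 α β = n1Mat 1 (α - β + 1) 0 := by
  ext i j
  fin_cases i <;> fin_cases j <;> simp [X1, X2, n1Mat] <;> ring

theorem X3_eq_n1Mat : X3 = n1Mat 0 0 1 := by
  ext i j
  fin_cases i <;> fin_cases j <;> simp [X3, n1Mat]

theorem X1_add_X2_sub_two_smul_X4 :
    X1 α β + X2 α β - (2 : ℂ) • X4 α β = n1Mat 0 (-1) (-(α + β) / 2) := by
  ext i j
  fin_cases i <;> fin_cases j <;> simp [X1, X2, X4, n1Mat] <;> ring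

theorem mem_n1_iff {M : Matrix (Fin 4) (Fin 4) ℂ} :
    M ∈ n1 α β ↔ ∃ p q r : ℂ, n1Mat p q r = M := by
  rw [n1, X1_sub_X2, X3_eq_n1Mat, X1_add_X2_sub_two_smul_X4, Submodule.mem_span_triple]
  constructor
  · rintro ⟨a, b, c, rfl⟩
    simp only [smul_n1Mat, n1Mat_add]
    exact ⟨_, _, _, rfl⟩
  · rintro ⟨p, q, r, rfl⟩
    refine ⟨p, r + (p * (α - β + 1) - q) * (α + β) / 2, p * (α - β + 1) - q, ?_⟩
    simp only [smul_n1Mat, n1Mat_add]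
    congr 1 <;> ring

theorem n1_sup_span_X4 : n1 α β ⊔ Submodule.span ℂ {X4 α β} = m α β :=
  Submodule.span_sub_add_sub_two_smul_sup_span_singleton _ _ _ _

theorem mem_m_iff {M : Matrix (Fin 4) (Fin 4) ℂ} :
    M ∈ m α β ↔ ∃ p q r c : ℂ, n1Mat p q r + c • X4 α β = M := by
  simp only [← n1_sup_span_X4, Submodule.mem_sup, mem_n1_iff, Submodule.mem_span_singleton]
  aesop

theorem n1_inf_span_X4 : n1 α β ⊓ Submodule.span ℂ {X4 α β} = ⊥ := by
  rw [eq_bot_iff]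
  rintro X ⟨hn, hX4⟩
  obtain ⟨c, rfl⟩ := Submodule.mem_span_singleton.mp hX4
  obtain ⟨p, q, r, h⟩ := (mem_n1_iff α β).mp hn
  have hc : (0 : ℂ) = c * 2 := by
    simpa only [trace_n1Mat, trace_smul, trace_X4, smul_eq_mul] using congrArg trace h
  simp [show c = 0 by linear_combination -hc / 2]

theorem setOf_mem_m_and_isNilpotent :
    {X | X ∈ m α β ∧ IsNilpotent X} = (n1 α β : Set (Matrix (Fin 4) (Fin 4) ℂ)) := by
  ext X
  simp only [Set.mem_ofPred_eq, SetLike.mem_coe]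
  constructor
  · rintro ⟨hX, hnil⟩
    obtain ⟨p, q, r, c, rfl⟩ := (mem_m_iff α β).mp hX
    have hc : 2 * c = 0 := by
      simpa only [trace_add, trace_n1Mat, trace_smul, trace_X4, smul_eq_mul, zero_add,
        mul_comm] using (isNilpotent_trace_of_isNilpotent hnil).eq_zero
    rw [show c = 0 by linear_combination hc / 2, zero_smul, add_zero]
    exact (mem_n1_iff α β).mpr ⟨p, q, r, rfl⟩
  · intro hX
    refine ⟨n1_sup_span_X4 α β ▸ Submodule.mem_sup_left hX, ?_⟩
    obtain ⟨p, q, r, rfl⟩ := (mem_n1_iff α β).mp hX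
    exact ⟨3, n1Mat_pow_three p q r⟩

theorem linearIndependent_n1_generators :
    LinearIndependent ℂ ![X1 α β - X2 α β, X3, X1 α β + X2 α β - (2 : ℂ) • X4 α β] := by
  rw [X1_sub_X2, X3_eq_n1Mat, X1_add_X2_sub_two_smul_X4, Fintype.linearIndependent_iff]
  intro g hg
  simp only [Fin.sum_univ_three, cons_val_zero, cons_val_one, cons_val, smul_n1Mat, n1Mat_add,
    n1Mat_eq_zero_iff] at hg
  obtain ⟨h0, h1, h2⟩ := hg
  have h0' : g 0 = 0 := by linear_combination h0
  have h2' : g 2 = 0 := by linear_combination (α - β + 1) * h0 - h1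
  have h1' : g 1 = 0 := by linear_combination h2 + (α + β) / 2 * h2'
  intro i
  fin_cases i <;> simp [h0', h1', h2']

theorem finrank_n1 : Module.finrank ℂ (n1 α β) = 3 := by
  have h := finrank_span_eq_card (linearIndependent_n1_generators α β)
  rwa [range_cons, range_cons, range_cons_empty, Fintype.card_fin] at h

theorem lie_mem_n1 {Y Z : Matrix (Fin 4) (Fin 4) ℂ} (hY : Y ∈ m α β) (hZ : Z ∈ n1 α β) :
    ⁅Y, Z⁆ ∈ n1 α β := by
  obtain ⟨p, q, r, c, rfl⟩ := (mem_m_iff α β).mp hY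
  obtain ⟨p', q', r', rfl⟩ := (mem_n1_iff α β).mp hZ
  have hlie : ⁅n1Mat p q r + c • X4 α β, n1Mat p' q' r'⁆
      = ⁅n1Mat p q r, n1Mat p' q' r'⁆ + c • ⁅X4 α β, n1Mat p' q' r'⁆ := by
    simp only [Ring.lie_def, add_mul, mul_add, smul_mul_assoc, mul_smul_comm, smul_sub]
    abel
  rw [hlie, lie_n1Mat, lie_X4_n1Mat, smul_zero, add_zero]
  exact (mem_n1_iff α β).mpr ⟨_, _, _, rfl⟩

end

theorem nilpotent_set_of_m_general (α β : ℂ) :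
    {X : Matrix (Fin 4) (Fin 4) ℂ | X ∈ m α β ∧ IsNilpotent X}
      = ↑(Submodule.span ℂ {X1 α β - X2 α β, X3, X1 α β + X2 α β - (2 : ℂ) • X4 α β}) ∧
    Module.finrank ℂ (Submodule.span ℂ
      ({X1 α β - X2 α β, X3, X1 α β + X2 α β - (2 : ℂ) • X4 α β} :
        Set (Matrix (Fin 4) (Fin 4) ℂ))) = 3 ∧
    (∀ Y ∈ m α β, ∀ Z ∈ Submodule.span ℂ
      ({X1 α β - X2 α β, X3, X1 α β + X2 α β - (2 : ℂ) • X4 α β} :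
        Set (Matrix (Fin 4) (Fin 4) ℂ)),
      ⁅Y, Z⁆ ∈ Submodule.span ℂ
        ({X1 α β - X2 α β, X3, X1 α β + X2 α β - (2 : ℂ) • X4 α β} :
          Set (Matrix (Fin 4) (Fin 4) ℂ))) ∧
    Submodule.span ℂ ({X1 α β - X2 α β, X3, X1 α β + X2 α β - (2 : ℂ) • X4 α β} :
        Set (Matrix (Fin 4) (Fin 4) ℂ)) ⊔ Submodule.span ℂ {X4 α β} = m α β ∧
    Submodule.span ℂ ({X1 α β - X2 α β, X3, X1 α β + X2 α β - (2 : ℂ) • X4 α β} :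
        Set (Matrix (Fin 4) (Fin 4) ℂ)) ⊓ Submodule.span ℂ {X4 α β} = ⊥ := by
  exact ⟨setOf_mem_m_and_isNilpotent α β, finrank_n1 α β,
    fun _ hY _ hZ ↦ lie_mem_n1 α β hY hZ, n1_sup_span_X4 α β, n1_inf_span_X4 α β⟩

/-- The nilpotent elements of m form the 3-dimensional subspace
n1 = span{X1−X2, X3, X1+X2−2X4}, an ideal of m, and m = n1 ⊕ ℂ·X4. -/
theorem nilpotent_set_of_m (α β : ℂ) (hαβ : α + β ≠ 0) :
    {X : Matrix (Fin 4) (Fin 4) ℂ | X ∈ m α β ∧ IsNilpotent X}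
      = ↑(Submodule.span ℂ {X1 α β - X2 α β, X3, X1 α β + X2 α β - (2 : ℂ) • X4 α β}) ∧
    Module.finrank ℂ (Submodule.span ℂ
      ({X1 α β - X2 α β, X3, X1 α β + X2 α β - (2 : ℂ) • X4 α β} :
        Set (Matrix (Fin 4) (Fin 4) ℂ))) = 3 ∧
    (∀ Y ∈ m α β, ∀ Z ∈ Submodule.span ℂ
      ({X1 α β - X2 α β, X3, X1 α β + X2 α β - (2 : ℂ) • X4 α β} :
        Set (Matrix (Fin 4) (Fin 4) ℂ)),
      ⁅Y, Z⁆ ∈ Submodule.span ℂ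
        ({X1 α β - X2 α β, X3, X1 α β + X2 α β - (2 : ℂ) • X4 α β} :
          Set (Matrix (Fin 4) (Fin 4) ℂ))) ∧
    Submodule.span ℂ ({X1 α β - X2 α β, X3, X1 α β + X2 α β - (2 : ℂ) • X4 α β} :
        Set (Matrix (Fin 4) (Fin 4) ℂ)) ⊔ Submodule.span ℂ {X4 α β} = m α β ∧
    Submodule.span ℂ ({X1 α β - X2 α β, X3, X1 α β + X2 α β - (2 : ℂ) • X4 α β} :
        Set (Matrix (Fin 4) (Fin 4) ℂ)) ⊓ Submodule.span ℂ {X4 α β} = ⊥ :=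
  nilpotent_set_of_m_general α β
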